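/- Let m be a non-negative integer. Then for all real numbers x and y, ∑_{q ⊢ m} (x^{\underline{q}} / q!) · (y^{\underline{|[q]|}} / [q]!) = (xy)^{\underline{m}} / m!, where the sum ranges over all integer partitions q of m. -/

import Mathlib

/-!
For natural `x` and `y` the identity reads
`C(xy, m) = ∑_{q ⊢ m} ∏ᵢ C(x, qᵢ) · C(y, |[q]|) · |[q]|! / [q]!`, the coefficient of `X^m`
in `((1 + X)^x)^y = (1 + g)^y` with `g = ∑_{a ≥ 1} C(x, a) X^a`: the binomial theorem expands
`(1 + g)^y` into the powers `g^k`, and the multinomial theorem indexes the monomials of `g^k` by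
multisets of `k` positive integers; those contributing to `X^m` are exactly the partitions of `m`
with `k` parts, each counted `k! / [q]!` times. For fixed `y` both sides are polynomials in `x`,
and for fixed `x` polynomials in `y`, so agreement on `ℕ × ℕ` extends to `ℝ × ℝ`.
-/

open Finset

/-- Falling factorial of a real number: `x (x-1) ⋯ (x-n+1)`. -/
def fallFac (x : ℝ) (n : ℕ) : ℝ := ∏ i ∈ Finset.range n, (x - i)

/-- `[q]!`: the product of the factorials of the multiplicities of the parts of `q`. -/
def multFact {m : ℕ} (q : Nat.Partition m) : ℕ :=
  ∏ i ∈ q.parts.toFinset, Nat.factorial (q.parts.count i)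

open Polynomial Nat

namespace Polynomial

variable {R : Type*} [CommSemiring R]

theorem one_add_X_pow_eq_one_add_sum_Icc {x N : ℕ} (hx : x ≤ N) :
    (1 + X : R[X]) ^ x = 1 + ∑ a ∈ Icc 1 N, C (x.choose a : R) * X ^ a := by
  ext n
  simp only [coeff_one_add_X_pow, coeff_add, coeff_one, finsetSum_coeff, coeff_C_mul_X_pow]
  rcases n.eq_zero_or_pos with rfl | hn
  · simp
  · rw [if_neg hn.ne', zero_add, sum_ite_eq]
    split_ifs with h
    · rfl
    · rw [choose_eq_zero_of_lt (by grind), cast_zero]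

theorem coeff_add_one_pow (g : R[X]) (y m : ℕ) :
    ((g + 1) ^ y).coeff m = ∑ k ∈ range (y + 1), (g ^ k).coeff m * y.choose k := by
  simp only [add_pow, one_pow, mul_one, finsetSum_coeff, coeff_mul_natCast]

theorem multiset_prod_map_C_mul_X_pow (t : Multiset ℕ) (c : ℕ → R) :
    (t.map fun a => C (c a) * X ^ a).prod = C (t.map c).prod * X ^ t.sum := by
  induction t using Multiset.induction_on with
  | empty => simp
  | cons a t ih =>
    simp only [Multiset.map_cons, Multiset.prod_cons, Multiset.sum_cons, ih, map_mul, pow_add]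
    ring

theorem coeff_sum_C_mul_X_pow_pow (s : Finset ℕ) (c : ℕ → R) (k m : ℕ) :
    ((∑ a ∈ s, C (c a) * X ^ a) ^ k).coeff m =
      ∑ t ∈ s.sym k with (Sym.toMultiset t).sum = m,
        ((t : Multiset ℕ).countPerms : R) * ((t : Multiset ℕ).map c).prod := by
  rw [sum_pow, finsetSum_coeff, sum_filter]
  refine sum_congr rfl fun t _ => ?_
  rw [multiset_prod_map_C_mul_X_pow, coeff_natCast_mul, coeff_C_mul_X_pow]
  split_ifs <;> simp_all

end Polynomial

theorem Nat.Partition.sum_card_eq_sum_sym {M : Type*} [AddCommMonoid M] {m N : ℕ} (hm : m ≤ N)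
    (k : ℕ) (F : Multiset ℕ → M) :
    ∑ q : m.Partition with Multiset.card q.parts = k, F q.parts =
      ∑ t ∈ (Icc 1 N).sym k with (Sym.toMultiset t).sum = m, F t := by
  refine sum_bij' (fun q hq => Sym.mk q.parts (mem_filter.1 hq).2)
    (fun t ht => ⟨t, fun ha => ?_, (mem_filter.1 ht).2⟩) (fun q _ => ?_) (fun t _ => ?_)
    (fun _ _ => rfl) (fun _ _ => rfl) (fun _ _ => rfl)
  · exact (mem_Icc.1 (mem_sym_iff.1 (mem_filter.1 ht).1 _ ha)).1
  · refine mem_filter.2 ⟨mem_sym_iff.2 fun a ha => mem_Icc.2 ?_, q.parts_sum⟩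
    exact ⟨q.parts_pos ha, (q.le_of_mem_parts ha).trans hm⟩
  · simp

theorem Nat.choose_mul_eq_sum_partition (x y m : ℕ) :
    (x * y).choose m = ∑ q : m.Partition,
      (q.parts.map x.choose).prod * y.choose (Multiset.card q.parts) * q.parts.countPerms := by
  -- Cutting off at `x + m` loses no term of `(1 + X)^x` and admits every part of a partition of `m`.
  set g : ℕ[X] := ∑ a ∈ Icc 1 (x + m), C (x.choose a) * X ^ a
  have hg : (1 + X : ℕ[X]) ^ x = g + 1 := by
    simp only [one_add_X_pow_eq_one_add_sum_Icc (le_add_right x m), cast_id, add_comm, g]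
  calc (x * y).choose m = ((g + 1) ^ y).coeff m := by
        rw [← hg, ← pow_mul, coeff_one_add_X_pow, cast_id]
    _ = ∑ k ∈ range (y + 1), ∑ q : m.Partition with Multiset.card q.parts = k,
          (q.parts.map x.choose).prod * y.choose (Multiset.card q.parts) * q.parts.countPerms := by
        rw [coeff_add_one_pow]
        refine sum_congr rfl fun k _ => ?_
        rw [coeff_sum_C_mul_X_pow_pow, Partition.sum_card_eq_sum_sym (le_add_left m x) k
          (fun t => (t.map x.choose).prod * y.choose (Multiset.card t) * t.countPerms), sum_mul]
        refine sum_congr rfl fun t _ => ?_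
        simp only [Sym.card_coe, cast_id]
        ring
    _ = _ := by
        rw [sum_fiberwise_eq_sum_filter]
        refine sum_filter_of_ne fun q _ hq => mem_range.2 (lt_succ_of_le ?_)
        by_contra h
        simp [choose_eq_zero_of_lt (not_le.1 h)] at hq

theorem fallFac_eq_eval_descPochhammer (t : ℝ) (n : ℕ) :
    fallFac t n = (descPochhammer ℝ n).eval t :=
  (descPochhammer_eval_eq_prod_range n t).symm

theorem fallFac_natCast (x n : ℕ) : fallFac x n = n ! * x.choose n := by
  rw [fallFac_eq_eval_descPochhammer, descPochhammer_eval_eq_descFactorial,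
    descFactorial_eq_factorial_mul_choose, cast_mul]

theorem fallFac_natCast_div_factorial (x n : ℕ) : fallFac x n / n ! = x.choose n := by
  rw [fallFac_natCast]
  field_simp

theorem multFact_mul_countPerms {m : ℕ} (q : m.Partition) :
    multFact q * q.parts.countPerms = (Multiset.card q.parts)! := by
  rw [multFact, Multiset.countPerms, Finsupp.multinomial_eq, Multiset.toFinsupp_support,
    ← Multiset.toFinset_sum_count_eq]
  exact multinomial_spec _ _

theorem fallFac_natCast_div_multFact (y : ℕ) {m : ℕ} (q : m.Partition) :
    fallFac y (Multiset.card q.parts) / multFact q =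
      y.choose (Multiset.card q.parts) * q.parts.countPerms := by
  have hq : (multFact q : ℝ) ≠ 0 := by
    exact_mod_cast (prod_pos fun _ _ => factorial_pos _).ne'
  rw [fallFac_natCast, ← multFact_mul_countPerms, cast_mul]
  field_simp

section PolynomialIdentity

variable {R : Type*} [CommRing R] [IsDomain R] [CharZero R]

theorem eq_of_forall_natCast_of_polynomial {f g : R → R} (hf : ∃ P : R[X], ∀ t, f t = P.eval t)
    (hg : ∃ Q : R[X], ∀ t, g t = Q.eval t) (h : ∀ n : ℕ, f n = g n) : f = g := by
  obtain ⟨P, hP⟩ := hf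
  obtain ⟨Q, hQ⟩ := hg
  have hPQ : P = Q := eq_of_infinite_eval_eq P Q <|
    Set.infinite_of_injective_forall_mem Nat.cast_injective fun n => by
      simp only [Set.mem_ofPred_eq, ← hP, ← hQ, h]
  funext t
  rw [hP, hQ, hPQ]

theorem eq_of_forall_natCast_of_polynomial₂ {F G : R → R → R}
    (hF₁ : ∀ y, ∃ P : R[X], ∀ x, F x y = P.eval x) (hF₂ : ∀ x, ∃ P : R[X], ∀ y, F x y = P.eval y)
    (hG₁ : ∀ y, ∃ P : R[X], ∀ x, G x y = P.eval x) (hG₂ : ∀ x, ∃ P : R[X], ∀ y, G x y = P.eval y)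
    (h : ∀ a b : ℕ, F a b = G a b) : F = G := by
  have hnat (a : ℕ) : F a = G a := eq_of_forall_natCast_of_polynomial (hF₂ a) (hG₂ a) (h a)
  funext x y
  exact congrFun (eq_of_forall_natCast_of_polynomial (f := (F · y)) (g := (G · y)) (hF₁ y) (hG₁ y)
    fun a => congrFun (hnat a) y) x

end PolynomialIdentity

noncomputable def partitionSum (m : ℕ) (x y : ℝ) : ℝ :=
  ∑ q : m.Partition,
    (q.parts.map fun a => fallFac x a / a !).prod * (fallFac y (Multiset.card q.parts) / multFact q)

theorem partitionSum_natCast (m x y : ℕ) : partitionSum m x y = fallFac (x * y) m / m ! := by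
  rw [← cast_mul, fallFac_natCast_div_factorial, choose_mul_eq_sum_partition, partitionSum]
  push_cast
  simp_rw [fallFac_natCast_div_factorial, fallFac_natCast_div_multFact]
  simp only [Multiset.map_map, Function.comp_def, mul_assoc]

theorem exists_polynomial_partitionSum_left (m : ℕ) (y : ℝ) :
    ∃ P : ℝ[X], ∀ x, partitionSum m x y = P.eval x :=
  ⟨∑ q : m.Partition, (q.parts.map fun a => descPochhammer ℝ a * C (a ! : ℝ)⁻¹).prod *
      C (fallFac y (Multiset.card q.parts) / multFact q), fun x => by
    simp only [partitionSum, eval_finsetSum, eval_mul, eval_C, eval_multiset_prod,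
      Multiset.map_map, Function.comp_def, fallFac_eq_eval_descPochhammer, div_eq_mul_inv]⟩

theorem exists_polynomial_partitionSum_right (m : ℕ) (x : ℝ) :
    ∃ P : ℝ[X], ∀ y, partitionSum m x y = P.eval y :=
  ⟨∑ q : m.Partition, C ((q.parts.map fun a => fallFac x a / a !).prod / multFact q) *
      descPochhammer ℝ (Multiset.card q.parts), fun y => by
    simp only [partitionSum, eval_finsetSum, eval_mul, eval_C, fallFac_eq_eval_descPochhammer]
    exact sum_congr rfl fun q _ => by ring⟩

theorem exists_polynomial_fallFac_mul_div (c : ℝ) (n : ℕ) :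
    ∃ P : ℝ[X], ∀ t, fallFac (c * t) n / n ! = P.eval t :=
  ⟨C (n ! : ℝ)⁻¹ * (descPochhammer ℝ n).comp (C c * X), fun t => by
    rw [eval_mul, eval_C, eval_comp, eval_mul, eval_C, eval_X, fallFac_eq_eval_descPochhammer,
      div_eq_inv_mul]⟩

theorem stmt2 (m : ℕ) (x y : ℝ) :
    ∑ q : Nat.Partition m,
      (q.parts.map fun a => fallFac x a / Nat.factorial a).prod *
        (fallFac y (Multiset.card q.parts) / multFact q)
    = fallFac (x * y) m / Nat.factorial m := by
  have hG₁ (y : ℝ) : ∃ P : ℝ[X], ∀ x, fallFac (x * y) m / m ! = P.eval x := by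
    simpa only [mul_comm y] using exists_polynomial_fallFac_mul_div y m
  exact congrFun₂ (eq_of_forall_natCast_of_polynomial₂ (F := partitionSum m)
    (G := fun x y => fallFac (x * y) m / m !) (exists_polynomial_partitionSum_left m)
    (exists_polynomial_partitionSum_right m) hG₁ (exists_polynomial_fallFac_mul_div · m)
    (partitionSum_natCast m)) x y
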